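/- arXiv:2109.02964 — 2 statements merged into one kernel-verified Lean document; each statement's English description precedes it below -/
import Mathlib

section
/- (Deletion lemma) Let Y be an N-element set, S a family of s-element subsets of Y, q < N/4 a positive integer, and T > 1 a real. Then for all but at most T^{−q/s}·C(N, m) of the m-element subsets Y_m ⊆ Y, there exists X ⊆ Y_m with |X| ≤ q such that Y_m \ X contains at most 2^s·T·|S|·(m/N)^s members of S. -/
/-!
Call `Z` bad if deleting any `X ⊆ Z` with `|X| ≤ q` leaves more than `t = 2^s T |𝒮| (m/N)^s`
members of `𝒮` inside `Z \ X`. Put `k = ⌊q/s⌋ + 1`, so that `k - 1` members of `𝒮` cover at most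
`q` points while `k s > q`. Choosing greedily, a bad `Z` contains at least `t^k` ordered `k`-tuples
of pairwise disjoint members of `𝒮`. A fixed such tuple covers `k s` points and lies in at most
`C(N, m) (m/N)^(k s)` of the `m`-subsets, so double counting gives
`#bad · t^k ≤ |𝒮|^k C(N, m) (m/N)^(k s)`, that is
`#bad ≤ C(N, m) / (2^(k s) T^k) ≤ T^(-q/s) C(N, m)`.
-/

open Finset Function

namespace Nat

theorem descFactorial_mul_pow_le {m N : ℕ} (h : m ≤ N) (j : ℕ) :
    m.descFactorial j * N ^ j ≤ N.descFactorial j * m ^ j := by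
  induction j with
  | zero => simp
  | succ j ih =>
    have hstep : (m - j) * N ≤ (N - j) * m := by
      rw [Nat.sub_mul, Nat.sub_mul, Nat.mul_comm N m]
      exact Nat.sub_le_sub_left (Nat.mul_le_mul_left j h) _
    calc m.descFactorial (j + 1) * N ^ (j + 1)
        = (m - j) * N * (m.descFactorial j * N ^ j) := by
          rw [descFactorial_succ, pow_succ]; ring
      _ ≤ (N - j) * m * (N.descFactorial j * m ^ j) := Nat.mul_le_mul hstep ih
      _ = N.descFactorial (j + 1) * m ^ (j + 1) := by
          rw [descFactorial_succ, pow_succ]; ring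

theorem choose_mul_pow_le {m N : ℕ} (h : m ≤ N) (j : ℕ) :
    m.choose j * N ^ j ≤ N.choose j * m ^ j := by
  have key := descFactorial_mul_pow_le h j
  rw [descFactorial_eq_factorial_mul_choose, descFactorial_eq_factorial_mul_choose,
    mul_assoc, mul_assoc] at key
  exact Nat.le_of_mul_le_mul_left key (factorial_pos j)

theorem choose_sub_mul_pow_le {j m N : ℕ} (hjm : j ≤ m) (hmN : m ≤ N) :
    (N - j).choose (m - j) * N ^ j ≤ N.choose m * m ^ j := by
  refine Nat.le_of_mul_le_mul_left ?_ (choose_pos (hjm.trans hmN))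
  calc N.choose j * ((N - j).choose (m - j) * N ^ j)
      = N.choose m * (m.choose j * N ^ j) := by rw [← mul_assoc, ← choose_mul hjm]; ring
    _ ≤ N.choose m * (N.choose j * m ^ j) := Nat.mul_le_mul_left _ (choose_mul_pow_le hmN j)
    _ = N.choose j * (N.choose m * m ^ j) := by ring

end Nat

theorem Pairwise.fin_cons {β : Type*} {r : β → β → Prop} [Std.Symm r] {k : ℕ} {g : Fin k → β}
    (hg : Pairwise (r on g)) {a : β} (ha : ∀ i, r a (g i)) :
    Pairwise (r on (Fin.cons a g : Fin (k + 1) → β)) := by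
  intro i j hij
  cases i using Fin.cases <;> cases j using Fin.cases
  · exact absurd rfl hij
  · exact ha _
  · exact symm (ha _)
  · exact hg (ne_of_apply_ne Fin.succ hij)

namespace Finset

variable {α : Type*} [DecidableEq α]

theorem card_filter_powersetCard_subset_le {U Y : Finset α} (hUY : U ⊆ Y) (m : ℕ) :
    (#{Z ∈ Y.powersetCard m | U ⊆ Z} : ℝ) ≤ (#Y).choose m * ((m : ℝ) / #Y) ^ #U := by
  by_cases h : #U ≤ m ∧ m ≤ #Y
  · obtain ⟨hUm, hmY⟩ := h
    rw [card_filter_powersetCard_subset U Y m hUY hUm]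
    rcases (#Y).eq_zero_or_pos with hY | hY
    · obtain ⟨rfl, hU⟩ : m = 0 ∧ #U = 0 := by omega
      simp [hY, hU]
    · rw [div_pow, ← mul_div_assoc, le_div_iff₀ (by positivity)]
      exact_mod_cast Nat.choose_sub_mul_pow_le hUm hmY
  · rw [filter_eq_empty_iff.2 fun Z hZ hUZ ↦ h ?_, card_empty, Nat.cast_zero]
    · positivity
    · obtain ⟨hZY, rfl⟩ := mem_powersetCard.1 hZ
      exact ⟨card_le_card hUZ, card_le_card hZY⟩

open Classical in
noncomputable def disjointTuples (𝒮 : Finset (Finset α)) (k : ℕ) (Z : Finset α) :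
    Finset (Fin k → Finset α) :=
  {f ∈ Fintype.piFinset fun _ ↦ 𝒮 | (∀ i, f i ⊆ Z) ∧ Pairwise (Disjoint on f)}

theorem mem_disjointTuples {𝒮 : Finset (Finset α)} {k : ℕ} {Z : Finset α} {f : Fin k → Finset α} :
    f ∈ disjointTuples 𝒮 k Z ↔ (∀ i, f i ∈ 𝒮) ∧ (∀ i, f i ⊆ Z) ∧ Pairwise (Disjoint on f) := by
  simp [disjointTuples]

theorem pow_le_card_disjointTuples {R : Type*} [Semiring R] [PartialOrder R] [IsOrderedRing R]
    {𝒮 : Finset (Finset α)} {Z : Finset α} {s k : ℕ} {t : R} (h𝒮 : ∀ A ∈ 𝒮, #A ≤ s) (ht : 0 ≤ t)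
    (hext : ∀ X ⊆ Z, #X + s ≤ k * s → t ≤ #{A ∈ 𝒮 | A ⊆ Z \ X}) :
    t ^ k ≤ #(disjointTuples 𝒮 k Z) := by
  induction k with
  | zero =>
    have : Fin.elim0 ∈ disjointTuples 𝒮 0 Z := by simp [mem_disjointTuples]
    simpa using Nat.mono_cast (α := R) (one_le_card.2 ⟨_, this⟩)
  | succ k ih =>
    have ih := ih fun X hXZ hX ↦ hext X hXZ (by rw [add_mul]; omega)
    let extensions (g : Fin k → Finset α) := {A ∈ 𝒮 | A ⊆ Z \ univ.biUnion g}
    have hmaps : ∀ p ∈ (disjointTuples 𝒮 k Z).sigma extensions,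
        Fin.cons p.2 p.1 ∈ disjointTuples 𝒮 (k + 1) Z := by
      rintro ⟨g, A⟩ hp
      simp only [mem_sigma, mem_filter, mem_disjointTuples, extensions] at hp
      obtain ⟨⟨hg𝒮, hgZ, hgd⟩, hA𝒮, hAZ⟩ := hp
      refine mem_disjointTuples.2 ⟨Fin.cases hA𝒮 hg𝒮, Fin.cases (hAZ.trans sdiff_subset) hgZ,
        hgd.fin_cons fun i ↦ ?_⟩
      exact disjoint_of_subset_left hAZ
        (disjoint_sdiff_self_left.mono_right (subset_biUnion_of_mem g (mem_univ i)))
    calc t ^ (k + 1) = t * t ^ k := pow_succ' t k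
      _ ≤ t * #(disjointTuples 𝒮 k Z) := mul_le_mul_of_nonneg_left ih ht
      _ = #(disjointTuples 𝒮 k Z) • t := by rw [nsmul_eq_mul, Nat.cast_comm]
      _ ≤ ∑ g ∈ disjointTuples 𝒮 k Z, (#(extensions g) : R) := by
        refine card_nsmul_le_sum _ _ _ fun g hg ↦ hext _ ?_ ?_
        · exact biUnion_subset.2 fun i _ ↦ (mem_disjointTuples.1 hg).2.1 i
        · have := card_biUnion_le_card_mul univ g s fun i _ ↦ h𝒮 _ ((mem_disjointTuples.1 hg).1 i)
          rw [card_univ, Fintype.card_fin] at this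
          rw [add_mul, one_mul]; omega
      _ = #((disjointTuples 𝒮 k Z).sigma extensions) := by rw [card_sigma]; push_cast; rfl
      _ ≤ #(disjointTuples 𝒮 (k + 1) Z) := by
        refine Nat.mono_cast (card_le_card_of_injOn _ hmaps ?_)
        rintro ⟨g, A⟩ - ⟨g', A'⟩ - h
        obtain ⟨rfl, rfl⟩ := Fin.cons_injective2 h
        rfl

theorem card_mul_pow_le_of_pow_le_card_disjointTuples {Y : Finset α} {𝒮 B : Finset (Finset α)}
    {s m k : ℕ} {t : ℝ} (h𝒮 : ∀ A ∈ 𝒮, A ⊆ Y ∧ #A = s) (hB : B ⊆ Y.powersetCard m)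
    (ht : ∀ Z ∈ B, t ^ k ≤ #(disjointTuples 𝒮 k Z)) :
    #B * t ^ k ≤ #𝒮 ^ k * ((#Y).choose m * ((m : ℝ) / #Y) ^ (k * s)) := by
  have hdc := card_nsmul_le_card_nsmul (fun Z f ↦ f ∈ disjointTuples 𝒮 k Z)
    (s := B) (t := Fintype.piFinset fun _ : Fin k ↦ 𝒮) (m := t ^ k)
    (n := (#Y).choose m * ((m : ℝ) / #Y) ^ (k * s)) ?_ ?_
  · simpa [nsmul_eq_mul, Fintype.card_piFinset] using hdc
  · intro Z hZ
    rw [bipartiteAbove, filter_mem_eq_inter, inter_eq_right.2 fun f hf ↦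
      Fintype.mem_piFinset.2 (mem_disjointTuples.1 hf).1]
    exact ht Z hZ
  · intro f hf
    rw [Fintype.mem_piFinset] at hf
    by_cases hd : Pairwise (Disjoint on f)
    · have hU : #(univ.biUnion f) = k * s := by
        rw [card_biUnion fun i _ j _ hij ↦ hd hij, sum_congr rfl fun i _ ↦ (h𝒮 _ (hf i)).2]
        simp
      rw [← hU]
      refine le_trans (Nat.mono_cast (card_le_card fun Z hZ ↦ ?_))
        (card_filter_powersetCard_subset_le (biUnion_subset.2 fun i _ ↦ (h𝒮 _ (hf i)).1) m)
      obtain ⟨hZB, hfZ⟩ := mem_filter.1 hZ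
      exact mem_filter.2 ⟨hB hZB, biUnion_subset.2 fun i _ ↦ (mem_disjointTuples.1 hfZ).2.1 i⟩
    · rw [bipartiteBelow, filter_eq_empty_iff.2 fun Z _ hfZ ↦ hd (mem_disjointTuples.1 hfZ).2.2]
      simp only [card_empty, Nat.cast_zero]
      positivity

theorem card_mul_two_pow_mul_pow_le_choose {Y : Finset α} {𝒮 B : Finset (Finset α)}
    {s m k : ℕ} {T : ℝ} (h𝒮 : ∀ A ∈ 𝒮, A ⊆ Y ∧ #A = s) (hs : 0 < s) (hk : 0 < k) (hT : 0 ≤ T)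
    (hB : B ⊆ Y.powersetCard m)
    (hbad : ∀ Z ∈ B, ∀ X ⊆ Z, #X + s ≤ k * s →
      2 ^ s * T * #𝒮 * ((m : ℝ) / #Y) ^ s < #{A ∈ 𝒮 | A ⊆ Z \ X}) :
    #B * (2 ^ (k * s) * T ^ k) ≤ ((#Y).choose m : ℝ) := by
  rcases B.eq_empty_or_nonempty with rfl | ⟨Z, hZ⟩
  · simp only [card_empty, Nat.cast_zero, zero_mul]
    positivity
  set t : ℝ := 2 ^ s * T * #𝒮 * ((m : ℝ) / #Y) ^ s
  have ht : 0 ≤ t := by positivity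
  obtain ⟨A, hA⟩ : {A ∈ 𝒮 | A ⊆ Z \ ∅}.Nonempty :=
    card_pos.1 (Nat.cast_pos.1 (ht.trans_lt (hbad Z hZ ∅ (empty_subset _)
      (by rw [card_empty, zero_add]; exact Nat.le_mul_of_pos_left s hk))))
  obtain ⟨hA𝒮, hAZ⟩ := mem_filter.1 hA
  obtain ⟨hZY, rfl⟩ := mem_powersetCard.1 (hB hZ)
  have hZpos : 0 < #Z := hs.trans_le ((h𝒮 A hA𝒮).2 ▸ card_le_card (hAZ.trans sdiff_subset))
  have hYpos : 0 < #Y := hZpos.trans_le (card_le_card hZY)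
  have h𝒮pos : 0 < #𝒮 := card_pos.2 ⟨A, hA𝒮⟩
  have hcount := card_mul_pow_le_of_pow_le_card_disjointTuples h𝒮 hB fun Z' hZ' ↦
    pow_le_card_disjointTuples (fun A hA ↦ (h𝒮 A hA).2.le) ht fun X hXZ hX ↦
      (hbad Z' hZ' X hXZ hX).le
  have hP : (0 : ℝ) < #𝒮 ^ k * ((#Z : ℝ) / #Y) ^ (k * s) := by positivity
  refine le_of_mul_le_mul_right ?_ hP
  calc #B * (2 ^ (k * s) * T ^ k) * (#𝒮 ^ k * ((#Z : ℝ) / #Y) ^ (k * s)) = #B * t ^ k := by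
        simp only [t]; ring
    _ ≤ _ := hcount
    _ = _ := by ring

theorem card_le_rpow_mul_choose_of_forall_lt_card_filter {Y : Finset α}
    {𝒮 B : Finset (Finset α)} {s m q : ℕ} {T : ℝ} (h𝒮 : ∀ A ∈ 𝒮, A ⊆ Y ∧ #A = s)
    (hT : 1 ≤ T) (hB : B ⊆ Y.powersetCard m)
    (hbad : ∀ Z ∈ B, ∀ X ⊆ Z, #X ≤ q →
      2 ^ s * T * #𝒮 * ((m : ℝ) / #Y) ^ s < #{A ∈ 𝒮 | A ⊆ Z \ X}) :
    #B ≤ T ^ (-(q : ℝ) / s) * (#Y).choose m := by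
  rcases Nat.eq_zero_or_pos s with rfl | hs
  · simpa using Nat.mono_cast (α := ℝ) (card_le_card hB)
  set k := q / s + 1
  have hqk : q < k * s := by rw [add_mul, one_mul]; exact Nat.lt_div_mul_add hs
  have hkq : k * s ≤ q + s := by
    rw [add_mul, one_mul]; exact Nat.add_le_add_right (q.div_mul_le_self s) s
  have hmain := card_mul_two_pow_mul_pow_le_choose (k := k) h𝒮 hs (Nat.succ_pos _)
    (by positivity) hB fun Z hZ X hXZ hX ↦ hbad Z hZ X hXZ (by omega)
  have hTk : T ^ ((q : ℝ) / s) ≤ 2 ^ (k * s) * T ^ k := by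
    calc T ^ ((q : ℝ) / s) ≤ T ^ (k : ℝ) := by
          refine Real.rpow_le_rpow_of_exponent_le hT ?_
          rw [div_le_iff₀ (by positivity)]
          exact_mod_cast hqk.le
      _ = T ^ k := Real.rpow_natCast T k
      _ ≤ 2 ^ (k * s) * T ^ k := le_mul_of_one_le_left (by positivity) (one_le_pow₀ one_le_two)
  rw [neg_div, Real.rpow_neg (by positivity), ← div_eq_inv_mul,
    le_div_iff₀ (Real.rpow_pos_of_pos (by positivity) _)]
  exact (mul_le_mul_of_nonneg_left hTk (Nat.cast_nonneg _)).trans hmain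

end Finset

open scoped Classical in
theorem stmt_10_general {α : Type*} [DecidableEq α] (Y : Finset α) (N s m q : ℕ) (T : ℝ)
    (hY : Y.card = N) (hT : 1 < T)
    (𝒮 : Finset (Finset α)) (h𝒮 : ∀ A ∈ 𝒮, A ⊆ Y ∧ A.card = s) :
    (((Y.powerset.filter (fun Ym => Ym.card = m ∧
        ¬ ∃ X ⊆ Ym, X.card ≤ q ∧
          (((𝒮.filter (fun A => A ⊆ Ym \ X)).card : ℝ) ≤
            2 ^ s * T * (𝒮.card : ℝ) * ((m : ℝ) / (N : ℝ)) ^ s))).card : ℝ)) ≤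
      T ^ (-(q : ℝ) / (s : ℝ)) * (N.choose m : ℝ) := by
  subst hY
  refine card_le_rpow_mul_choose_of_forall_lt_card_filter h𝒮 hT.le (fun Z hZ ↦ ?_) ?_
  · simp only [mem_filter, mem_powerset] at hZ
    exact mem_powersetCard.2 ⟨hZ.1, hZ.2.1⟩
  · intro Z hZ X hXZ hX
    simp only [mem_filter, not_exists, not_and, not_le] at hZ
    exact hZ.2.2 X hXZ hX

open scoped Classical in
/-- Deletion lemma: for all but at most `T^(−q/s)·C(N, m)` of the `m`-element subsets
`Y_m ⊆ Y`, there is `X ⊆ Y_m` with `|X| ≤ q` such that `Y_m \ X` contains at most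
`2^s·T·|𝒮|·(m/N)^s` members of the family `𝒮` of `s`-element subsets of `Y`. -/
theorem stmt_10 {α : Type*} [DecidableEq α] (Y : Finset α) (N s m q : ℕ) (T : ℝ)
    (hY : Y.card = N) (hq : 0 < q) (hqN : 4 * q < N) (hT : 1 < T)
    (𝒮 : Finset (Finset α)) (h𝒮 : ∀ A ∈ 𝒮, A ⊆ Y ∧ A.card = s) :
    (((Y.powerset.filter (fun Ym => Ym.card = m ∧
        ¬ ∃ X ⊆ Ym, X.card ≤ q ∧
          (((𝒮.filter (fun A => A ⊆ Ym \ X)).card : ℝ) ≤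
            2 ^ s * T * (𝒮.card : ℝ) * ((m : ℝ) / (N : ℝ)) ^ s))).card : ℝ)) ≤
      T ^ (-(q : ℝ) / (s : ℝ)) * (N.choose m : ℝ) :=
  stmt_10_general Y N s m q T hY hT 𝒮 h𝒮
end

section
/- Let β ∈ (0,1), z, m', n be positive integers with m = 2z·m' and m < n/2. Suppose for every set Ŝ ⊆ [n] a family A(Ŝ) of m'-element subsets of [n] is given such that at most (β/4)^{2m'}·C(n, m') m'-element sets lie outside A(Ŝ). Define a sequence (S₁, ..., S_{2z}) of m'-element subsets to be bad if there exist Z ⊆ [2z] with |Z| ≤ z and sets X_i ⊆ S_i with |X_i| ≤ m' for i ∈ Z, such that for every i ∉ Z, S_i ∉ A(⋃_{j ∈ Z, j ≤ i−1}(S_j \ X_j)). Then the number of bad sequences is at most 2^{2z}·2^{m'z}·(β/4)^{m}·C(n, m')^{2z} ≤ (β/2)^m·C(n, m')^{2z}, provided m is sufficiently large relative to z. -/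
open Finset
open scoped Classical

variable {N : ℕ}

noncomputable def ambientSet (n N : ℕ) : Finset (Fin N → Finset ℕ × Finset ℕ) :=
  Fintype.piFinset (fun _ => (Finset.Icc 1 n).powerset ×ˢ (Finset.Icc 1 n).powerset)

noncomputable def shatF (Z : Finset (Fin N)) (g : Fin N → Finset ℕ × Finset ℕ) (i : Fin N) :
    Finset ℕ :=
  (Z.filter (fun j => j < i)).biUnion (fun j => (g j).1 \ (g j).2)

lemma shatF_congr {Z : Finset (Fin N)} {g g' : Fin N → Finset ℕ × Finset ℕ} {i : Fin N}
    (h : ∀ j : Fin N, j < i → g j = g' j) : shatF Z g i = shatF Z g' i := by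
  unfold shatF
  apply Finset.biUnion_congr rfl
  intro j hj
  rw [h j (Finset.mem_filter.1 hj).2]

def QQ (m' : ℕ) (A : Finset ℕ → Finset (Finset ℕ)) (Z : Finset (Fin N)) (k : ℕ)
    (g : Fin N → Finset ℕ × Finset ℕ) : Prop :=
  (∀ i : Fin N, (i : ℕ) < k →
    ((g i).1.card = m' ∧
      (i ∈ Z → (g i).2 ⊆ (g i).1 ∧ (g i).2.card ≤ m') ∧
      (i ∉ Z → (g i).2 = ∅ ∧ (g i).1 ∉ A (shatF Z g i)))) ∧
  (∀ i : Fin N, k ≤ (i : ℕ) → g i = (∅, ∅))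

noncomputable def bnd (n m' B N : ℕ) (Z : Finset (Fin N)) (i : ℕ) : ℕ :=
  if h : i < N then (if (⟨i, h⟩ : Fin N) ∈ Z then n.choose m' * 2 ^ m' else B) else 1

lemma card_QQ_le (n m' B : ℕ) (A : Finset ℕ → Finset (Finset ℕ)) (Z : Finset (Fin N))
    (hB : ∀ Shat : Finset ℕ,
      ((Finset.Icc 1 n).powerset.filter (fun S => S.card = m' ∧ S ∉ A Shat)).card ≤ B) :
    ∀ k, k ≤ N →
      ((ambientSet n N).filter (QQ m' A Z k)).card ≤
        ∏ i ∈ Finset.range k, bnd n m' B N Z i := by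
  intro k
  induction k with
  | zero =>
      intro _
      simp only [Finset.range_zero, Finset.prod_empty]
      refine Finset.card_le_one.2 ?_
      intro a ha b hb
      rw [Finset.mem_filter] at ha hb
      funext i
      rw [(ha.2.2 i (Nat.zero_le _)), (hb.2.2 i (Nat.zero_le _))]
  | succ k ih =>
      intro hk1
      have hkN : k < N := hk1
      set κ : Fin N := ⟨k, hkN⟩ with hκ
      set φ : (Fin N → Finset ℕ × Finset ℕ) → (Fin N → Finset ℕ × Finset ℕ) :=
        fun g => Function.update g κ ((∅, ∅) : Finset ℕ × Finset ℕ) with hφ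
      set s := (ambientSet n N).filter (QQ m' A Z (k+1)) with hs
      -- image of φ lands in the level-k set
      have himg : s.image φ ⊆ (ambientSet n N).filter (QQ m' A Z k) := by
        intro h hh
        obtain ⟨g, hg, rfl⟩ := Finset.mem_image.1 hh
        rw [hs, Finset.mem_filter] at hg
        obtain ⟨hgamb, hgQ⟩ := hg
        rw [Finset.mem_filter]
        refine ⟨?_, ?_, ?_⟩
        · rw [ambientSet, Fintype.mem_piFinset] at hgamb ⊢
          intro i
          by_cases hi : i = κ
          · subst hi
            simp only [hφ, Function.update_self]
            rw [Finset.mem_product]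
            exact ⟨Finset.empty_mem_powerset _, Finset.empty_mem_powerset _⟩
          · simp only [hφ, Function.update_of_ne hi]
            exact hgamb i
        · intro i hik
          have hne : i ≠ κ := by
            intro he
            rw [he] at hik
            simp only [hκ] at hik
            omega
          have h1 : φ g i = g i := Function.update_of_ne hne _ _
          have h2 : shatF Z (φ g) i = shatF Z g i := by
            apply shatF_congr
            intro j hj
            have hj' : (j : ℕ) < (i : ℕ) := hj
            have : j ≠ κ := by
              intro he
              rw [he] at hj'
              simp only [hκ] at hj'
              omega
            exact Function.update_of_ne this _ _
          rw [h1, h2]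
          exact hgQ.1 i (Nat.lt_succ_of_lt hik)
        · intro i hik
          by_cases hi : i = κ
          · subst hi
            simp only [hφ, Function.update_self]
          · have h2 : k + 1 ≤ (i : ℕ) := by
              have : (i : ℕ) ≠ k := fun h => hi (Fin.ext h)
              omega
            simp only [hφ, Function.update_of_ne hi]
            exact hgQ.2 i h2
      -- fibers of φ are small
      have hbval : bnd n m' B N Z k
          = if κ ∈ Z then n.choose m' * 2 ^ m' else B := by
        rw [bnd, dif_pos hkN]
      have hfib : ∀ h ∈ s.image φ,
          (s.filter (fun g => φ g = h)).card ≤ bnd n m' B N Z k := by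
        intro h hh
        have hinj : Set.InjOn (fun g : Fin N → Finset ℕ × Finset ℕ => g κ)
            ↑(Finset.filter (fun g => φ g = h) s) := by
          intro g hg g' hg' he
          simp only [Finset.coe_filter, Set.mem_setOf_eq] at hg hg'
          funext i
          by_cases hi : i = κ
          · subst hi; exact he
          · have := congrFun (hg.2.trans hg'.2.symm) i
            simpa only [hφ, Function.update_of_ne hi] using this
        by_cases hκZ : κ ∈ Z
        · rw [hbval, if_pos hκZ]
          set W := ((Finset.Icc 1 n).powersetCard m').biUnion
              (fun S => ({S} : Finset (Finset ℕ)) ×ˢ S.powerset) with hW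
          have hmap : ∀ g ∈ s.filter (fun g => φ g = h), g κ ∈ W := by
            intro g hg
            have hg' := Finset.mem_filter.1 (Finset.mem_filter.1 hg).1
            obtain ⟨hgamb, hgQ⟩ := hg'
            rw [ambientSet, Fintype.mem_piFinset] at hgamb
            have hsub : (g κ).1 ⊆ Finset.Icc 1 n :=
              Finset.mem_powerset.1 (Finset.mem_product.1 (hgamb κ)).1
            have hc : (g κ).1.card = m' := (hgQ.1 κ (Nat.lt_succ_self k)).1
            have hX : (g κ).2 ⊆ (g κ).1 := ((hgQ.1 κ (Nat.lt_succ_self k)).2.1 hκZ).1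
            refine Finset.mem_biUnion.2 ⟨(g κ).1, Finset.mem_powersetCard.2 ⟨hsub, hc⟩, ?_⟩
            exact Finset.mem_product.2 ⟨Finset.mem_singleton_self _, Finset.mem_powerset.2 hX⟩
          calc (s.filter (fun g => φ g = h)).card ≤ W.card :=
                Finset.card_le_card_of_injOn (fun g => g κ) hmap hinj
            _ ≤ ∑ S ∈ (Finset.Icc 1 n).powersetCard m',
                  (({S} : Finset (Finset ℕ)) ×ˢ S.powerset).card := Finset.card_biUnion_le
            _ = ∑ S ∈ (Finset.Icc 1 n).powersetCard m', 2 ^ m' := by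
                refine Finset.sum_congr rfl (fun S hS => ?_)
                rw [Finset.card_product, Finset.card_singleton, one_mul,
                  Finset.card_powerset, (Finset.mem_powersetCard.1 hS).2]
            _ = ((Finset.Icc 1 n).powersetCard m').card * 2 ^ m' := by
                rw [Finset.sum_const, smul_eq_mul]
            _ = n.choose m' * 2 ^ m' := by
                rw [Finset.card_powersetCard, Nat.card_Icc]
                simp
        · rw [hbval, if_neg hκZ]
          set W := ((Finset.Icc 1 n).powerset.filter
              (fun S => S.card = m' ∧ S ∉ A (shatF Z h κ))) ×ˢ ({∅} : Finset (Finset ℕ)) with hW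
          have hmap : ∀ g ∈ s.filter (fun g => φ g = h), g κ ∈ W := by
            intro g hg
            have hgfe : φ g = h := (Finset.mem_filter.1 hg).2
            have hg' := Finset.mem_filter.1 (Finset.mem_filter.1 hg).1
            obtain ⟨hgamb, hgQ⟩ := hg'
            rw [ambientSet, Fintype.mem_piFinset] at hgamb
            have hsub : (g κ).1 ⊆ Finset.Icc 1 n :=
              Finset.mem_powerset.1 (Finset.mem_product.1 (hgamb κ)).1
            have hc : (g κ).1.card = m' := (hgQ.1 κ (Nat.lt_succ_self k)).1
            have hX : (g κ).2 = ∅ := ((hgQ.1 κ (Nat.lt_succ_self k)).2.2 hκZ).1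
            have hnA : (g κ).1 ∉ A (shatF Z g κ) :=
              ((hgQ.1 κ (Nat.lt_succ_self k)).2.2 hκZ).2
            have hsh : shatF Z g κ = shatF Z h κ := by
              apply shatF_congr
              intro j hj
              have : j ≠ κ := ne_of_lt hj
              rw [← hgfe]
              exact (Function.update_of_ne this _ _).symm
            refine Finset.mem_product.2 ⟨?_, Finset.mem_singleton.2 hX⟩
            refine Finset.mem_filter.2 ⟨Finset.mem_powerset.2 hsub, hc, ?_⟩
            rw [← hsh]
            exact hnA
          calc (s.filter (fun g => φ g = h)).card ≤ W.card :=
                Finset.card_le_card_of_injOn (fun g => g κ) hmap hinj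
            _ = ((Finset.Icc 1 n).powerset.filter
                  (fun S => S.card = m' ∧ S ∉ A (shatF Z h κ))).card := by
                rw [hW, Finset.card_product, Finset.card_singleton, mul_one]
            _ ≤ B := hB _
      calc s.card ≤ bnd n m' B N Z k * (s.image φ).card :=
            Finset.card_le_mul_card_image s _ hfib
        _ ≤ bnd n m' B N Z k * ((ambientSet n N).filter (QQ m' A Z k)).card :=
            Nat.mul_le_mul_left _ (Finset.card_le_card himg)
        _ ≤ bnd n m' B N Z k * ∏ i ∈ Finset.range k, bnd n m' B N Z i :=
            Nat.mul_le_mul_left _ (ih (Nat.le_of_succ_le hk1))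
        _ = ∏ i ∈ Finset.range (k+1), bnd n m' B N Z i := by
            rw [Finset.prod_range_succ, mul_comm]

lemma prod_bnd (n m' B : ℕ) (Z : Finset (Fin N)) :
    ∏ i ∈ Finset.range N, bnd n m' B N Z i
      = (n.choose m' * 2 ^ m') ^ Z.card * B ^ (N - Z.card) := by
  have h1 : ∏ i ∈ Finset.range N, bnd n m' B N Z i
      = ∏ i : Fin N, (if i ∈ Z then n.choose m' * 2 ^ m' else B) := by
    rw [← Fin.prod_univ_eq_prod_range (fun i => bnd n m' B N Z i) N]
    refine Finset.prod_congr rfl (fun i _ => ?_)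
    rw [bnd, dif_pos i.isLt]
  rw [h1, ← Finset.prod_filter_mul_prod_filter_not Finset.univ (· ∈ Z)]
  have h2 : Finset.univ.filter (· ∈ Z) = Z := Finset.filter_univ_mem Z
  have h3 : (Finset.univ.filter (fun i => ¬ i ∈ Z)).card = N - Z.card := by
    have : Finset.univ.filter (fun i => ¬ i ∈ Z) = Zᶜ := by
      ext i; simp [Finset.mem_compl]
    rw [this, Finset.card_compl, Fintype.card_fin]
  have e1 : ∏ x ∈ Finset.univ.filter (· ∈ Z), (if x ∈ Z then n.choose m' * 2 ^ m' else B)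
      = ∏ _x ∈ Finset.univ.filter (· ∈ Z), (n.choose m' * 2 ^ m') :=
    Finset.prod_congr rfl (fun x hx => if_pos (Finset.mem_filter.1 hx).2)
  have e2 : ∏ x ∈ Finset.univ.filter (¬ · ∈ Z), (if x ∈ Z then n.choose m' * 2 ^ m' else B)
      = ∏ _x ∈ Finset.univ.filter (¬ · ∈ Z), B :=
    Finset.prod_congr rfl (fun x hx => if_neg (Finset.mem_filter.1 hx).2)
  rw [e1, e2, Finset.prod_const, Finset.prod_const, h2, h3]
open scoped Classical in
/-- Counting bad sequences: if for every `Ŝ ⊆ [n]` at most `(β/4)^{2m'}·C(n,m')` of the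
`m'`-element subsets of `[n]` lie outside the family `A(Ŝ)`, then (for `m = 2z·m'`
sufficiently large relative to `z`, and `m < n/2`) the number of bad sequences
`(S₁, …, S_{2z})` is at most `(β/2)^m·C(n, m')^{2z}`. -/
theorem stmt_15 (β : ℝ) (hβ0 : 0 < β) (hβ1 : β < 1) (z : ℕ) (hz : 0 < z) :
    ∃ m₀ : ℕ, ∀ n m' : ℕ, 0 < m' → m₀ ≤ 2 * z * m' → 2 * (2 * z * m') < n →
      ∀ A : Finset ℕ → Finset (Finset ℕ),
        (∀ Shat : Finset ℕ,
          ((((Finset.Icc 1 n).powerset.filter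
              (fun S => S.card = m' ∧ S ∉ A Shat)).card : ℝ) ≤
            (β / 4) ^ (2 * m') * (n.choose m' : ℝ))) →
        ({f : Fin (2 * z) → Finset ℕ |
            (∀ i, f i ⊆ Finset.Icc 1 n ∧ (f i).card = m') ∧
            ∃ Z : Finset (Fin (2 * z)), Z.card ≤ z ∧
              ∃ X : Fin (2 * z) → Finset ℕ,
                (∀ i ∈ Z, X i ⊆ f i ∧ (X i).card ≤ m') ∧
                ∀ i ∉ Z, f i ∉
                  A ((Z.filter (fun j => j < i)).biUnion (fun j => f j \ X j))}.ncard : ℝ) ≤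
          (β / 2) ^ (2 * z * m') * ((n.choose m' : ℝ)) ^ (2 * z) := by
  refine ⟨4 * z, ?_⟩
  intro n m' hm' hm0 hmn A hA
  set C := n.choose m' with hCdef
  set B := ⌊(β / 4) ^ (2 * m') * (C : ℝ)⌋₊ with hBdef
  have hm'2 : 2 ≤ m' := by
    refine Nat.le_of_mul_le_mul_left ?_ (show 0 < 2 * z by omega)
    calc 2 * z * 2 = 4 * z := by ring
      _ ≤ 2 * z * m' := hm0
  have hβ4 : (0:ℝ) < β / 4 := by linarith
  have hB : ∀ Shat : Finset ℕ,
      ((Finset.Icc 1 n).powerset.filter (fun S => S.card = m' ∧ S ∉ A Shat)).card ≤ B :=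
    fun S => Nat.le_floor (hA S)
  have hBC : B ≤ C := by
    have h1 : (β / 4) ^ (2 * m') * (C : ℝ) ≤ (C : ℝ) := by
      have h2 : (β / 4) ^ (2 * m') ≤ 1 :=
        pow_le_one₀ (by linarith) (by linarith)
      nlinarith [Nat.cast_nonneg (α := ℝ) C]
    calc B ≤ ⌊(C : ℝ)⌋₊ := Nat.floor_mono h1
      _ = C := Nat.floor_natCast C
  have hBr : (B : ℝ) ≤ (β / 4) ^ (2 * m') * (C : ℝ) := Nat.floor_le (by positivity)
  set Zs := (Finset.univ : Finset (Finset (Fin (2 * z)))).filter (fun Z => Z.card ≤ z) with hZs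
  set T := Zs.biUnion (fun Z => (ambientSet n (2 * z)).filter (QQ m' A Z (2 * z))) with hT
  set bad := {f : Fin (2 * z) → Finset ℕ |
      (∀ i, f i ⊆ Finset.Icc 1 n ∧ (f i).card = m') ∧
      ∃ Z : Finset (Fin (2 * z)), Z.card ≤ z ∧
        ∃ X : Fin (2 * z) → Finset ℕ,
          (∀ i ∈ Z, X i ⊆ f i ∧ (X i).card ≤ m') ∧
          ∀ i ∉ Z, f i ∉
            A ((Z.filter (fun j => j < i)).biUnion (fun j => f j \ X j))} with hbad
  -- Step 1: every bad f has a witness in T projecting to it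
  have hkey : ∀ f ∈ bad, ∃ g ∈ T, (fun i => (g i).1) = f := by
    intro f hf
    obtain ⟨h1, Z, hZc, X, hX, hA2⟩ := hf
    refine ⟨fun i => (f i, if i ∈ Z then X i else ∅), ?_, rfl⟩
    refine Finset.mem_biUnion.2 ⟨Z, Finset.mem_filter.2 ⟨Finset.mem_univ _, hZc⟩, ?_⟩
    refine Finset.mem_filter.2 ⟨?_, ?_, ?_⟩
    · rw [ambientSet, Fintype.mem_piFinset]
      intro i
      refine Finset.mem_product.2 ⟨Finset.mem_powerset.2 (h1 i).1, Finset.mem_powerset.2 ?_⟩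
      by_cases hi : i ∈ Z
      · simp only [if_pos hi]
        exact (hX i hi).1.trans (h1 i).1
      · simp only [if_neg hi]
        exact Finset.empty_subset _
    · intro i _
      refine ⟨(h1 i).2, ?_, ?_⟩
      · intro hi
        simp only [if_pos hi]
        exact hX i hi
      · intro hi
        refine ⟨if_neg hi, ?_⟩
        have hsh : shatF Z (fun i => (f i, if i ∈ Z then X i else ∅)) i
            = (Z.filter (fun j => j < i)).biUnion (fun j => f j \ X j) := by
          rw [shatF]
          apply Finset.biUnion_congr rfl
          intro j hj
          simp only [if_pos (Finset.mem_filter.1 hj).1]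
        rw [hsh]
        exact hA2 i hi
    · intro i hi
      exact absurd i.isLt (by omega)
  -- Step 2: ncard bad ≤ T.card
  have hstep2 : (bad.ncard : ℝ) ≤ (T.card : ℝ) := by
    have hfin : (↑T : Set (Fin (2 * z) → Finset ℕ × Finset ℕ)).Finite := T.finite_toSet
    set F : (Fin (2 * z) → Finset ℕ) → (Fin (2 * z) → Finset ℕ × Finset ℕ) :=
      fun f => if h : f ∈ bad then (hkey f h).choose else (fun _ => (∅, ∅)) with hF
    have hspec : ∀ f (h : f ∈ bad), F f ∈ T ∧ (fun i => ((F f) i).1) = f := by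
      intro f h
      rw [hF]
      simp only [dif_pos h]
      exact ⟨(hkey f h).choose_spec.1, (hkey f h).choose_spec.2⟩
    have hmaps : ∀ f ∈ bad, F f ∈ (↑T : Set (Fin (2 * z) → Finset ℕ × Finset ℕ)) :=
      fun f h => (hspec f h).1
    have hinj : Set.InjOn F bad := by
      intro f hf f' hf' he
      rw [← (hspec f hf).2, ← (hspec f' hf').2, he]
    have := Set.ncard_le_ncard_of_injOn F hmaps hinj hfin
    rw [Set.ncard_coe_finset] at this
    exact_mod_cast this
  -- Step 3: natural number bound on T.card
  have hperZ : ∀ Zc : ℕ, Zc ≤ z →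
      (C * 2 ^ m') ^ Zc * B ^ (2 * z - Zc) ≤ 2 ^ (m' * z) * (C ^ z * B ^ z) := by
    intro a ha
    have h2 : 2 * z - a = (z - a) + z := by omega
    calc (C * 2 ^ m') ^ a * B ^ (2 * z - a)
        = 2 ^ (m' * a) * (C ^ a * (B ^ (z - a) * B ^ z)) := by
          rw [mul_pow, ← pow_mul, h2, pow_add]; ring
      _ ≤ 2 ^ (m' * z) * (C ^ a * (C ^ (z - a) * B ^ z)) := by
          refine Nat.mul_le_mul (Nat.pow_le_pow_right (by norm_num)
            (Nat.mul_le_mul_left m' ha)) ?_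
          exact Nat.mul_le_mul_left _ (Nat.mul_le_mul_right _ (Nat.pow_le_pow_left hBC _))
      _ = 2 ^ (m' * z) * (C ^ (a + (z - a)) * B ^ z) := by rw [pow_add]; ring
      _ = 2 ^ (m' * z) * (C ^ z * B ^ z) := by rw [Nat.add_sub_cancel' ha]
  have hTcard : T.card ≤ 2 ^ (2 * z) * (2 ^ (m' * z) * (C ^ z * B ^ z)) := by
    calc T.card ≤ ∑ Z ∈ Zs, ((ambientSet n (2 * z)).filter (QQ m' A Z (2 * z))).card :=
          Finset.card_biUnion_le
      _ ≤ ∑ _Z ∈ Zs, 2 ^ (m' * z) * (C ^ z * B ^ z) := by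
          refine Finset.sum_le_sum ?_
          intro Z hZ
          have h1 := card_QQ_le n m' B A Z hB (2 * z) le_rfl
          rw [prod_bnd] at h1
          exact h1.trans (hperZ Z.card (Finset.mem_filter.1 hZ).2)
      _ = Zs.card * (2 ^ (m' * z) * (C ^ z * B ^ z)) := by
          rw [Finset.sum_const, smul_eq_mul]
      _ ≤ 2 ^ (2 * z) * (2 ^ (m' * z) * (C ^ z * B ^ z)) := by
          refine Nat.mul_le_mul_right _ ?_
          calc Zs.card ≤ (Finset.univ : Finset (Finset (Fin (2 * z)))).card :=
                Finset.card_filter_le _ _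
            _ = 2 ^ (2 * z) := by rw [Finset.card_univ, Fintype.card_finset, Fintype.card_fin]
  -- Step 4: real arithmetic
  have hstep4 : ((2 : ℝ) ^ (2 * z) * (2 ^ (m' * z) * ((C : ℝ) ^ z * (B : ℝ) ^ z))) ≤
      (β / 2) ^ (2 * z * m') * (C : ℝ) ^ (2 * z) := by
    have hC0 : (0:ℝ) ≤ (C : ℝ) := Nat.cast_nonneg C
    have hBz : (B : ℝ) ^ z ≤ ((β / 4) ^ (2 * m') * (C : ℝ)) ^ z :=
      pow_le_pow_left₀ (Nat.cast_nonneg B) hBr z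
    have hexp : 2 * z + m' * z ≤ 2 * z * m' := by nlinarith
    calc (2 : ℝ) ^ (2 * z) * (2 ^ (m' * z) * ((C : ℝ) ^ z * (B : ℝ) ^ z))
        ≤ (2 : ℝ) ^ (2 * z) * (2 ^ (m' * z) * ((C : ℝ) ^ z *
            ((β / 4) ^ (2 * m') * (C : ℝ)) ^ z)) := by
          gcongr (2 : ℝ) ^ (2 * z) * (2 ^ (m' * z) * ((C : ℝ) ^ z * ?_))
      _ = (β / 4) ^ (2 * z * m') * 2 ^ (2 * z + m' * z) * (C : ℝ) ^ (2 * z) := by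
          rw [mul_pow, ← pow_mul, show 2 * m' * z = 2 * z * m' from by ring, pow_add,
            show 2 * z = z + z from by ring, pow_add]
          ring
      _ ≤ (β / 4) ^ (2 * z * m') * 2 ^ (2 * z * m') * (C : ℝ) ^ (2 * z) := by
          gcongr (β / 4) ^ (2 * z * m') * ?_ * (C : ℝ) ^ (2 * z)
          exact pow_le_pow_right₀ (by norm_num) hexp
      _ = (β / 2) ^ (2 * z * m') * (C : ℝ) ^ (2 * z) := by
          rw [← mul_pow, show β / 4 * 2 = β / 2 from by ring]
  -- combine
  calc (bad.ncard : ℝ) ≤ (T.card : ℝ) := hstep2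
    _ ≤ ((2 ^ (2 * z) * (2 ^ (m' * z) * (C ^ z * B ^ z)) : ℕ) : ℝ) := by exact_mod_cast hTcard
    _ = (2 : ℝ) ^ (2 * z) * (2 ^ (m' * z) * ((C : ℝ) ^ z * (B : ℝ) ^ z)) := by push_cast; ring
    _ ≤ (β / 2) ^ (2 * z * m') * (C : ℝ) ^ (2 * z) := hstep4
end
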